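/- Fix s > 0 and t ∈ [0,1), and define p(z) = 1 + 2(1−t)·Σ_{n≥1} (s/(s+n)) zⁿ for z in the open unit disk 𝔻. Then p(z) + (1/s)·z·p′(z) = 1 + 2(1−t)·z/(1−z) for all z ∈ 𝔻, and consequently inf_{z∈𝔻} Re[p(z) + (1/s)·z·p′(z)] = t. -/

import Mathlib

/-!
The coefficients `aₙ = s / (s + n + 1)` of `(p - 1) / (2 (1 - t))` satisfy
`aₙ (1 + (n + 1) / s) = 1`, so the operator `f ↦ f + z f' / s` turns that series into the geometric
series `z / (1 - z)`. Hence `p + z p' / s = t + (1 - t) (1 + z) / (1 - z)`, and the Cayley transform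
`(1 + z) / (1 - z)` maps the disk onto the right half-plane, whose real parts fill `(0, ∞)`.
-/

open Complex Set Metric

noncomputable def p (s t : ℝ) (z : ℂ) : ℂ :=
  1 + 2 * (1 - (t : ℂ)) * ∑' n : ℕ, ((s : ℂ) / (s + n + 1)) * z ^ (n + 1)

lemma summable_succ_mul_geometric {r : ℝ} (hr0 : 0 ≤ r) (hr : r < 1) :
    Summable fun n : ℕ => ((n : ℝ) + 1) * r ^ n := by
  have hn : Summable fun n : ℕ => (n : ℝ) ^ 1 * r ^ n :=
    summable_pow_mul_geometric_of_norm_lt_one 1 (by rwa [Real.norm_of_nonneg hr0])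
  exact (hn.add (summable_geometric_of_lt_one hr0 hr)).congr fun n => by ring

section BoundedCoefficients

variable {a : ℕ → ℂ} {C : ℝ}

lemma norm_mul_succ_mul_pow_le (ha : ∀ n, ‖a n‖ ≤ C) (n : ℕ) {y : ℂ} {r : ℝ} (hy : ‖y‖ ≤ r) :
    ‖a n * ((n : ℂ) + 1) * y ^ n‖ ≤ C * (((n : ℝ) + 1) * r ^ n) := by
  have hsucc : ‖(n : ℂ) + 1‖ = (n : ℝ) + 1 := by exact_mod_cast Complex.norm_natCast (n + 1)
  rw [norm_mul, norm_mul, norm_pow, hsucc, mul_assoc]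
  gcongr
  · exact (norm_nonneg _).trans (ha 0)
  · exact ha n

lemma summable_mul_succ_mul_pow (ha : ∀ n, ‖a n‖ ≤ C) {z : ℂ} (hz : ‖z‖ < 1) :
    Summable fun n : ℕ => a n * ((n : ℂ) + 1) * z ^ n :=
  .of_norm_bounded ((summable_succ_mul_geometric (norm_nonneg z) hz).mul_left C)
    fun n => norm_mul_succ_mul_pow_le ha n le_rfl

lemma hasDerivAt_tsum_mul_pow_succ (ha : ∀ n, ‖a n‖ ≤ C) {z : ℂ} (hz : ‖z‖ < 1) :
    HasDerivAt (fun y => ∑' n : ℕ, a n * y ^ (n + 1)) (∑' n : ℕ, a n * ((n : ℂ) + 1) * z ^ n) z := by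
  set r := (1 + ‖z‖) / 2 with hr
  have hr1 : r < 1 := by linarith
  have hzr : z ∈ ball (0 : ℂ) r := mem_ball_zero_iff.mpr (by linarith)
  refine hasDerivAt_tsum_of_isPreconnected (g := fun n y => a n * y ^ (n + 1))
    (g' := fun n y => a n * ((n : ℂ) + 1) * y ^ n)
    ((summable_succ_mul_geometric (by positivity) hr1).mul_left C) isOpen_ball
    (convex_ball 0 r).isPreconnected (fun n y _ => ?_)
    (fun n y hy => norm_mul_succ_mul_pow_le ha n (mem_ball_zero_iff.mp hy).le)
    (mem_ball_self (by positivity)) (by simp) hzr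
  simpa only [Nat.add_sub_cancel, Nat.cast_succ, mul_assoc] using
    (hasDerivAt_pow (n + 1) y).const_mul (a n)
  trace_state

end BoundedCoefficients

noncomputable def pCoeff (s : ℝ) (n : ℕ) : ℂ := s / (s + n + 1)

variable {s : ℝ}

lemma norm_pCoeff_le_one (hs : 0 ≤ s) (n : ℕ) : ‖pCoeff s n‖ ≤ 1 := by
  have hpos : (0 : ℝ) < s + n + 1 := by positivity
  rw [pCoeff, show (s : ℂ) + n + 1 = ((s + n + 1 : ℝ) : ℂ) by push_cast; rfl, ← ofReal_div,
    norm_real, Real.norm_of_nonneg (by positivity), div_le_one hpos]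
  linarith [n.cast_nonneg (α := ℝ)]

lemma pCoeff_mul_one_add_succ_div (hs : 0 < s) (n : ℕ) :
    pCoeff s n * (1 + ((n : ℂ) + 1) / s) = 1 := by
  have hs' : (s : ℂ) ≠ 0 := ofReal_ne_zero.mpr hs.ne'
  have hden : (s : ℂ) + n + 1 ≠ 0 := by
    rw [show (s : ℂ) + n + 1 = ((s + n + 1 : ℝ) : ℂ) by push_cast; rfl, ofReal_ne_zero]
    positivity
  rw [pCoeff]
  field_simp
  ring

lemma hasSum_pow_succ {z : ℂ} (hz : ‖z‖ < 1) : HasSum (fun n : ℕ => z ^ (n + 1)) (z / (1 - z)) := by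
  simpa only [pow_succ', div_eq_mul_inv] using (hasSum_geometric_of_norm_lt_one hz).mul_left z

lemma tsum_pCoeff_add_div_mul_tsum (hs : 0 < s) {z : ℂ} (hz : ‖z‖ < 1) :
    (∑' n : ℕ, pCoeff s n * z ^ (n + 1)) +
      1 / (s : ℂ) * z * ∑' n : ℕ, pCoeff s n * ((n : ℂ) + 1) * z ^ n = z / (1 - z) := by
  have hderiv := (summable_mul_succ_mul_pow (norm_pCoeff_le_one hs.le) hz).hasSum
  have hsum := (hasSum_pow_succ hz).sub (hderiv.mul_left (1 / (s : ℂ) * z))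
  rw [(hsum.congr_fun fun n => ?_).tsum_eq]
  · ring
  · linear_combination (z ^ (n + 1)) * pCoeff_mul_one_add_succ_div hs n

variable {t : ℝ}

lemma hasDerivAt_p (hs : 0 < s) {z : ℂ} (hz : ‖z‖ < 1) :
    HasDerivAt (p s t) (2 * (1 - (t : ℂ)) * ∑' n : ℕ, pCoeff s n * ((n : ℂ) + 1) * z ^ n) z :=
  ((hasDerivAt_tsum_mul_pow_succ (norm_pCoeff_le_one hs.le) hz).const_mul _).const_add 1

lemma p_add_div_mul_deriv (hs : 0 < s) {z : ℂ} (hz : ‖z‖ < 1) :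
    p s t z + 1 / (s : ℂ) * z * deriv (p s t) z = 1 + 2 * (1 - (t : ℂ)) * z / (1 - z) := by
  have key := tsum_pCoeff_add_div_mul_tsum hs hz
  rw [(hasDerivAt_p hs hz).deriv, p]
  unfold pCoeff at key ⊢
  linear_combination (2 * (1 - (t : ℂ))) * key

lemma re_one_add_two_mul_div_one_sub {z : ℂ} (hz : z ≠ 1) :
    (1 + 2 * (1 - (t : ℂ)) * z / (1 - z)).re = t + (1 - t) * ((1 + z) / (1 - z)).re := by
  have hz' : 1 - z ≠ 0 := sub_ne_zero.mpr hz.symm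
  rw [show 1 + 2 * (1 - (t : ℂ)) * z / (1 - z) = t + ((1 - t : ℝ) : ℂ) * ((1 + z) / (1 - z)) by
    push_cast; field_simp; ring, add_re, ofReal_re, re_ofReal_mul]

lemma re_cayley_pos {z : ℂ} (hz : ‖z‖ < 1) : 0 < ((1 + z) / (1 - z)).re := by
  have hz1 : 1 - z ≠ 0 := sub_ne_zero.mpr (by rintro rfl; simp at hz)
  have hre : ((1 + z) / (1 - z)).re = (1 - normSq z) / normSq (1 - z) := by
    rw [div_re, normSq_apply z]
    field_simp
    simp only [add_re, sub_re, add_im, sub_im, one_re, one_im]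
    ring
  rw [hre]
  have : normSq z < 1 := by rw [normSq_eq_norm_sq]; nlinarith [norm_nonneg z]
  exact div_pos (by linarith) (normSq_pos.mpr hz1)

lemma image_re_cayley_ball : (fun z : ℂ => ((1 + z) / (1 - z)).re) '' ball 0 1 = Ioi 0 := by
  refine Subset.antisymm (image_subset_iff.mpr fun z hz => re_cayley_pos (mem_ball_zero_iff.mp hz))
    fun w (hw : 0 < w) => ⟨((w - 1) / (w + 1) : ℝ), ?_, ?_⟩
  · rw [mem_ball_zero_iff, norm_real, Real.norm_eq_abs, abs_div, abs_of_pos (by linarith : 0 < w + 1),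
      div_lt_one (by linarith), abs_sub_lt_iff]
    constructor <;> linarith
  · have hw1 : (w : ℂ) + 1 ≠ 0 := by exact_mod_cast (by positivity : w + 1 ≠ 0)
    dsimp only
    rw [show (1 + ((w - 1) / (w + 1) : ℝ) : ℂ) / (1 - ((w - 1) / (w + 1) : ℝ)) = (w : ℂ) by
      push_cast; field_simp; ring, ofReal_re]

theorem p_identity_and_inf (s t : ℝ) (hs : 0 < s) (ht : t ∈ Set.Ico (0:ℝ) 1) :
    (∀ z ∈ Metric.ball (0 : ℂ) 1,
      p s t z + (1 / (s : ℂ)) * z * deriv (p s t) z = 1 + 2 * (1 - (t : ℂ)) * z / (1 - z)) ∧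
    sInf ((fun z => (p s t z + (1 / (s : ℂ)) * z * deriv (p s t) z).re) '' Metric.ball (0 : ℂ) 1)
      = t := by
  have hident : ∀ z ∈ ball (0 : ℂ) 1,
      p s t z + (1 / (s : ℂ)) * z * deriv (p s t) z = 1 + 2 * (1 - (t : ℂ)) * z / (1 - z) :=
    fun z hz => p_add_div_mul_deriv hs (mem_ball_zero_iff.mp hz)
  refine ⟨hident, ?_⟩
  have himage : (fun z => (p s t z + (1 / (s : ℂ)) * z * deriv (p s t) z).re) '' ball 0 1 =
      (t + ·) '' (((1 - t) * ·) '' ((fun z : ℂ => ((1 + z) / (1 - z)).re) '' ball 0 1)) := by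
    simp only [image_image]
    refine image_congr fun z hz => ?_
    rw [hident z hz, re_one_add_two_mul_div_one_sub]
    rintro rfl
    simp at hz
  rw [himage, image_re_cayley_ball, image_mul_left_Ioi (sub_pos.mpr ht.2), image_const_add_Ioi,
    mul_zero, add_zero, csInf_Ioi]
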